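/- Let N = (V,E,X) be an undirected binary phylogenetic network, e_ρ ∈ E, and R ⊆ V with |R| = |E| − |V| + 1. Then (N, e_ρ, R) is stack-free orientable if and only if (N, e_ρ, R) has no reticulation cut and R is an independent set of N. -/

import Mathlib

open Classical

/-- Indegree of a vertex in a digraph given by a relation. -/
noncomputable def inDeg {W : Type} (D : W → W → Prop) (b : W) : ℕ :=
  Nat.card {a : W // D a b}

/-- Outdegree of a vertex in a digraph given by a relation. -/
noncomputable def outDeg {W : Type} (D : W → W → Prop) (a : W) : ℕ :=
  Nat.card {b : W // D a b}

/-- A digraph is acyclic if it has no directed cycle. -/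
def DigraphAcyclic {W : Type} (D : W → W → Prop) : Prop :=
  ∀ a : W, ¬ Relation.TransGen D a a

/-- `D` is an orientation of the undirected graph `H`: every arc of `D` lies on an
edge of `H`, and every edge of `H` is given exactly one direction. -/
def IsOrientationOf {W : Type} (H : SimpleGraph W) (D : W → W → Prop) : Prop :=
  (∀ a b, D a b → H.Adj a b) ∧ (∀ a b, H.Adj a b → (D a b ↔ ¬ D b a))

/-- The graph obtained from `G` by subdividing the edge `{u,v}` with a new vertex
(represented by `none`). -/
def subdivide {V : Type} (G : SimpleGraph V) (u v : V) : SimpleGraph (Option V) where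
  Adj a b := match a, b with
    | some a', some b' => G.Adj a' b' ∧ ¬ (s(a', b') = s(u, v))
    | some a', none => a' = u ∨ a' = v
    | none, some b' => b' = u ∨ b' = v
    | none, none => False
  symm := by
    constructor
    intro a b h
    match a, b with
    | some a', some b' =>
        exact ⟨h.1.symm, fun he => h.2 (by rwa [Sym2.eq_swap] at he)⟩
    | some a', none => exact h
    | none, some b' => exact h
  loopless := by
    constructor
    intro a h
    match a with
    | some a' => exact G.loopless.irrefl a' h.1
    | none => exact h

/-- An undirected binary phylogenetic network: a connected graph in which every
vertex has degree `1` (a leaf) or degree `3`. -/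
def IsUndirBinNet {V : Type} [Fintype V] (G : SimpleGraph V) [DecidableRel G.Adj] : Prop :=
  G.Connected ∧ ∀ w : V, G.degree w = 1 ∨ G.degree w = 3

/-- An orientation of the binary network `G` with root subdividing the edge `{u,v}`
and reticulation set `R`: an acyclic orientation of the subdivided graph in which
the root has indegree `0`, the vertices of `R` have indegree `2` and all other
vertices have indegree `1`. -/
def IsBinOrientation {V : Type} [Fintype V] (G : SimpleGraph V) (u v : V) (R : Set V)
    (D : Option V → Option V → Prop) : Prop :=
  IsOrientationOf (subdivide G u v) D ∧ DigraphAcyclic D ∧ inDeg D none = 0 ∧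
    ∀ w : V, (w ∈ R ↔ inDeg D (some w) = 2) ∧ (w ∉ R → inDeg D (some w) = 1)


/-- A reticulation cut for `(G, {u,v}, R)`: a pair `(R', E')` with `R' ⊆ R`,
`|R'| = |E'|`, `E'` an edge-cut of the subdivided graph such that each edge of `E'`
is incident to exactly one vertex of `R'`, each vertex of `R'` is incident to
exactly one edge of `E'`, and the root `ρ` is separated from every vertex of `R'`. -/
def IsRetCut {V : Type} (G : SimpleGraph V) (u v : V) (R : Set V)
    (R' : Set V) (E' : Set (Sym2 (Option V))) : Prop :=
  R' ⊆ R ∧ E' ⊆ (subdivide G u v).edgeSet ∧ R'.ncard = E'.ncard ∧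
  ¬ ((subdivide G u v).deleteEdges E').Connected ∧
  (∀ e ∈ E', ∃! r : V, r ∈ R' ∧ (some r : Option V) ∈ e) ∧
  (∀ r ∈ R', ∃! e : Sym2 (Option V), e ∈ E' ∧ (some r : Option V) ∈ e) ∧
  (∀ r ∈ R', ¬ ((subdivide G u v).deleteEdges E').Reachable none (some r))

/-- A stack-free orientation: an orientation in which no reticulation has a
reticulation as a child. -/
def IsStackFreeOrientation {V : Type} [Fintype V] (G : SimpleGraph V) (u v : V)
    (R : Set V) (D : Option V → Option V → Prop) : Prop :=
  IsBinOrientation G u v R D ∧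
    ∀ a b : V, D (some a) (some b) → a ∈ R → b ∉ R

/-!
Stack-freeness only adds independence of `R` to the existence of an orientation with
reticulation set `R`, so the point is to characterise the latter. An orientation is obstructed
by a reticulation cut: a vertex cut off from the root and minimal for the orientation has all its
in-arcs in the cut, so it is a reticulation meeting two cut edges. Conversely, run bootstrap
percolation from the root on the subdivided network, where a reticulation needs two active
neighbours and every other vertex one. If it stalls, the edges leaving the active set, with their
inactive endpoints, form a reticulation cut. If it activates everything, orienting each edge
towards the later activated endpoint gives an acyclic orientation whose indegrees are at least the
prescribed ones; as `|R| = |E| - |V| + 1`, both sum to the number of edges of the subdivided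
network, so they agree.
-/

section Digraph

variable {W : Type}

lemma inDeg_eq_ncard (D : W → W → Prop) (b : W) : inDeg D b = {a | D a b}.ncard := rfl

lemma DigraphAcyclic.exists_minimal [Finite W] {D : W → W → Prop} (hD : DigraphAcyclic D)
    {B : Set W} (hB : B.Nonempty) : ∃ b ∈ B, ∀ a ∈ B, ¬ D a b := by
  have : IsTrans W (Relation.TransGen D) := ⟨fun _ _ _ => Relation.TransGen.trans⟩
  have : Std.Irrefl (Relation.TransGen D) := ⟨hD⟩
  obtain ⟨b, hbB, hmin⟩ :=
    (Finite.wellFounded_of_trans_of_irrefl (Relation.TransGen D)).has_min B hB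
  exact ⟨b, hbB, fun a ha hab => hmin a ha (.single hab)⟩

lemma exists_arc_of_inDeg_ne_zero {D : W → W → Prop} {b : W}
    (h : inDeg D b ≠ 0) : ∃ a, D a b :=
  Set.nonempty_of_ncard_ne_zero h

lemma exists_ne_arc_of_inDeg_eq_two {D : W → W → Prop} {a b : W}
    (h : inDeg D b = 2) (ha : D a b) : ∃ a', a' ≠ a ∧ D a' b := by
  rw [inDeg_eq_ncard, Set.ncard_eq_two] at h
  obtain ⟨x, y, hxy, hset⟩ := h
  have hmem : ∀ z, D z b ↔ z = x ∨ z = y := fun z => by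
    simpa using Set.ext_iff.mp hset z
  rcases (hmem a).mp ha with rfl | rfl
  · exact ⟨y, hxy.symm, (hmem y).mpr (.inr rfl)⟩
  · exact ⟨x, hxy, (hmem x).mpr (.inl rfl)⟩

lemma IsOrientationOf.sum_inDeg [Fintype W] {H : SimpleGraph W} {D : W → W → Prop}
    (hD : IsOrientationOf H D) : ∑ b, inDeg D b = H.edgeSet.ncard := by
  obtain ⟨harc, hone⟩ := hD
  have hbij : Function.Bijective (fun p : {p : W × W // D p.1 p.2} =>
      (⟨s(p.1.1, p.1.2), harc _ _ p.2⟩ : H.edgeSet)) := by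
    refine ⟨fun ⟨⟨a, b⟩, hab⟩ ⟨⟨c, d⟩, hcd⟩ heq => ?_, fun ⟨e, he⟩ => ?_⟩
    · rcases Sym2.eq_iff.mp (congrArg Subtype.val heq) with ⟨rfl, rfl⟩ | ⟨rfl, rfl⟩
      · rfl
      · exact absurd hcd ((hone _ _ (harc _ _ hab)).mp hab)
    · induction e using Sym2.ind with
      | _ a b =>
        by_cases hab : D a b
        · exact ⟨⟨(a, b), hab⟩, rfl⟩
        · refine ⟨⟨(b, a), ?_⟩, Subtype.ext Sym2.eq_swap⟩
          exact not_not.mp (mt (hone a b he).mpr hab)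
  rw [← Nat.card_coe_set_eq, ← Nat.card_eq_of_bijective _ hbij]
  have harcs : {p : W × W // D p.1 p.2} ≃ Σ b, {a // D a b} :=
    { toFun := fun p => ⟨p.1.2, p.1.1, p.2⟩
      invFun := fun q => ⟨(q.2.1, q.1), q.2.2⟩ }
  exact (Nat.card_sigma).symm.trans (Nat.card_congr harcs.symm)

lemma IsOrientationOf.inDeg_eq_of_le_of_sum_eq [Fintype W] {H : SimpleGraph W}
    {D : W → W → Prop} (hD : IsOrientationOf H D) {k : W → ℕ} (hk : ∀ z, k z ≤ inDeg D z)
    (hsum : ∑ z, k z = H.edgeSet.ncard) (z : W) : inDeg D z = k z :=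
  ((Finset.sum_eq_sum_iff_of_le fun z _ => hk z).mp (hsum.trans hD.sum_inDeg.symm) z
    (Finset.mem_univ z)).symm

end Digraph

section Subdivision

variable {V : Type} {G : SimpleGraph V} {u v : V}

@[simp] lemma subdivide_adj_some_some {a b : V} :
    (subdivide G u v).Adj (some a) (some b) ↔ G.Adj a b ∧ s(a, b) ≠ s(u, v) := Iff.rfl

@[simp] lemma subdivide_adj_none_some {b : V} :
    (subdivide G u v).Adj none (some b) ↔ b = u ∨ b = v := Iff.rfl

@[simp] lemma subdivide_adj_some_none {a : V} :
    (subdivide G u v).Adj (some a) none ↔ a = u ∨ a = v := Iff.rfl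

lemma edgeSet_subdivide :
    (subdivide G u v).edgeSet =
      Sym2.map some '' (G.edgeSet \ {s(u, v)}) ∪ {s(none, some u), s(none, some v)} := by
  ext e
  induction e using Sym2.ind with
  | _ x y =>
    match x, y with
    | some a, some b =>
      rw [Set.mem_union, ← Sym2.map_mk,
        (Sym2.map.injective (Option.some_injective V)).mem_set_image, Sym2.map_mk]
      simp
    | none, none | none, some _ | some _, none => simp [Sym2.exists, eq_comm]

lemma ncard_edgeSet_subdivide [Finite V] (huv : G.Adj u v) :
    (subdivide G u v).edgeSet.ncard = G.edgeSet.ncard + 1 := by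
  have hroot : ∀ e ∈ Sym2.map some '' (G.edgeSet \ {s(u, v)}), none ∉ e := by
    rintro _ ⟨e, -, rfl⟩
    simp [Sym2.mem_map]
  have hdisj : Disjoint (Sym2.map some '' (G.edgeSet \ {s(u, v)}))
      {s(none, some u), s(none, some v)} := by
    rw [Set.disjoint_right]
    rintro e (rfl | rfl) he <;> exact hroot _ he (Sym2.mem_mk_left _ _)
  have hpair : s(none, some u) ≠ s(none, some v) := by simpa using huv.ne
  have huvE : s(u, v) ∈ G.edgeSet := huv
  have hpos : 0 < G.edgeSet.ncard := (Set.ncard_pos).mpr ⟨_, huvE⟩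
  rw [edgeSet_subdivide, Set.ncard_union_eq hdisj,
    Set.ncard_image_of_injective _ (Sym2.map.injective (Option.some_injective V)),
    Set.ncard_sdiff_singleton_of_mem huvE, Set.ncard_pair hpair]
  omega

end Subdivision

section Bootstrap

variable {W : Type} (H : SimpleGraph W) (k : W → ℕ)

/-- Threshold bootstrap percolation with threshold `k z` at `z`. -/
def bootstrapStage : ℕ → Set W
  | 0 => ∅
  | n + 1 => bootstrapStage n ∪ {z | k z ≤ {x | H.Adj x z ∧ x ∈ bootstrapStage n}.ncard}

def bootstrapClosure : Set W := ⋃ n, bootstrapStage H k n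

variable {H k}

lemma mem_bootstrapClosure {z : W} : z ∈ bootstrapClosure H k ↔ ∃ n, z ∈ bootstrapStage H k n :=
  Set.mem_iUnion

lemma bootstrapStage_mono : Monotone (bootstrapStage H k) :=
  monotone_nat_of_le_succ fun _ => Set.subset_union_left

lemma card_lt_of_notMem_bootstrapClosure [Finite W] {z : W} (hz : z ∉ bootstrapClosure H k)
    (S : Finset W) (hS : ↑S ⊆ bootstrapClosure H k) (hadj : ∀ x ∈ S, H.Adj x z) :
    S.card < k z := by
  obtain ⟨n, hn⟩ :=
    bootstrapStage_mono.directed_le.exists_mem_subset_of_finset_subset_biUnion hS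
  by_contra! hk
  refine hz (mem_bootstrapClosure.mpr ⟨n + 1, Or.inr ?_⟩)
  calc k z ≤ S.card := hk
    _ = (S : Set W).ncard := (Set.ncard_coe_finset S).symm
    _ ≤ _ := Set.ncard_le_ncard fun x hx => Set.mem_ofPred.mpr ⟨hadj x hx, hn hx⟩

lemma isOrientationOf_of_injective {α : Type} [LinearOrder α] {f : W → α}
    (hf : Function.Injective f) : IsOrientationOf H (fun x y => H.Adj x y ∧ f x < f y) := by
  refine ⟨fun _ _ h => h.1, fun x y hxy => ⟨fun h h' => h.2.not_gt h'.2, fun h => ⟨hxy, ?_⟩⟩⟩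
  refine (lt_or_gt_of_ne (hf.ne hxy.ne)).resolve_right fun hlt => h ⟨hxy.symm, hlt⟩

lemma digraphAcyclic_of_strictMono {α : Type} [Preorder α] {D : W → W → Prop} (f : W → α)
    (hf : ∀ x y, D x y → f x < f y) : DigraphAcyclic D := by
  intro a hcyc
  have hlt : ∀ x y, Relation.TransGen D x y → f x < f y := fun x y h => by
    induction h with
    | single h => exact hf _ _ h
    | tail _ h ih => exact ih.trans (hf _ _ h)
  exact lt_irrefl _ (hlt a a hcyc)

/-- Orient each edge towards the later activated endpoint, ties broken by an enumeration of `W`: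
a vertex activated at stage `n + 1` then receives arcs from all its neighbours active at stage
`n`. -/
lemma exists_acyclic_orientation_of_bootstrapClosure_eq_univ [Fintype W]
    (hA : bootstrapClosure H k = Set.univ) :
    ∃ D, IsOrientationOf H D ∧ DigraphAcyclic D ∧ ∀ z, k z ≤ inDeg D z := by
  have hact : ∀ z, ∃ n, z ∈ bootstrapStage H k n := fun z =>
    mem_bootstrapClosure.mp (hA ▸ Set.mem_univ z)
  let f : W → ℕ ×ₗ Fin (Fintype.card W) :=
    fun z => toLex (Nat.find (hact z), Fintype.equivFin W z)
  have hf : Function.Injective f := fun x y h =>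
    (Fintype.equivFin W).injective (Prod.ext_iff.mp (toLex.injective h)).2
  refine ⟨_, isOrientationOf_of_injective hf,
    digraphAcyclic_of_strictMono f fun _ _ h => h.2, fun z => ?_⟩
  obtain ⟨n, hn⟩ : ∃ n, Nat.find (hact z) = n + 1 :=
    Nat.exists_eq_succ_of_ne_zero fun h => by simpa [h, bootstrapStage] using Nat.find_spec (hact z)
  have hz := Nat.find_spec (hact z)
  rw [hn] at hz
  rcases hz with hz | hz
  · exact absurd hz (Nat.find_min (hact z) (by omega))
  refine hz.trans (Set.ncard_le_ncard fun x hx => Set.mem_ofPred.mpr ⟨hx.1, ?_⟩)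
  have : Nat.find (hact x) ≤ n := Nat.find_min' (hact x) hx.2
  exact Prod.Lex.toLex_lt_toLex.mpr (.inl (by omega))

end Bootstrap

section Orientation

variable {V : Type} {G : SimpleGraph V} {u v : V} {R : Set V}

noncomputable def prescribedInDeg (R : Set V) : Option V → ℕ
  | none => 0
  | some w => if w ∈ R then 2 else 1

lemma prescribedInDeg_le_two (z : Option V) : prescribedInDeg R z ≤ 2 := by
  rcases z with _ | w
  · simp [prescribedInDeg]
  · by_cases hw : w ∈ R <;> simp [prescribedInDeg, hw]

lemma eq_some_mem_of_one_lt_prescribedInDeg {z : Option V} (hz : 1 < prescribedInDeg R z) :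
    ∃ r ∈ R, z = some r := by
  cases z with
  | none => simp [prescribedInDeg] at hz
  | some w => exact ⟨w, by by_contra hw; simp [prescribedInDeg, hw] at hz, rfl⟩

lemma sum_prescribedInDeg [Fintype V] :
    ∑ z, prescribedInDeg R z = R.ncard + Fintype.card V := by
  have h (w : V) : prescribedInDeg R (some w) = (if w ∈ R then 1 else 0) + 1 := by
    by_cases hw : w ∈ R <;> simp [prescribedInDeg, hw]
  simp only [Fintype.sum_option, h, Finset.sum_add_distrib, Finset.sum_boole]
  simp [prescribedInDeg, Set.ncard_eq_toFinset_card']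

variable {D : Option V → Option V → Prop}

lemma isBinOrientation_iff [Fintype V] :
    IsBinOrientation G u v R D ↔ IsOrientationOf (subdivide G u v) D ∧ DigraphAcyclic D ∧
      ∀ z, inDeg D z = prescribedInDeg R z := by
  refine and_congr_right fun _ => and_congr_right fun _ => ?_
  rw [Option.forall]
  refine and_congr_right fun _ => forall_congr' fun w => ?_
  by_cases hw : w ∈ R
  · simp [prescribedInDeg, hw]
  · simpa [prescribedInDeg, hw] using fun h => by omega

end Orientation

section Forward

variable {V : Type} [Fintype V] {G : SimpleGraph V} {u v : V} {R : Set V}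
  {D : Option V → Option V → Prop}

lemma IsBinOrientation.exists_arc (hD : IsBinOrientation G u v R D) {z : Option V}
    (hz : z ≠ none) : ∃ a, D a z := by
  obtain ⟨w, rfl⟩ := Option.ne_none_iff_exists'.mp hz
  refine exists_arc_of_inDeg_ne_zero ?_
  rw [(isBinOrientation_iff.mp hD).2.2, prescribedInDeg]
  split_ifs <;> omega

lemma IsBinOrientation.inDeg_eq_two (hD : IsBinOrientation G u v R D) {r : V} (hr : r ∈ R) :
    inDeg D (some r) = 2 :=
  (hD.2.2.2 r).1.mp hr

/-- Otherwise every vertex other than the root would have an in-neighbour other than the root,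
which is impossible in a finite acyclic digraph. -/
lemma IsBinOrientation.not_mem_and_mem (hD : IsBinOrientation G u v R D) :
    ¬ (u ∈ R ∧ v ∈ R) := by
  rintro ⟨hu, hv⟩
  obtain ⟨b, hb, hmin⟩ := hD.2.1.exists_minimal (B := {z | z ≠ none}) ⟨some u, by simp⟩
  obtain ⟨a, hab⟩ := hD.exists_arc hb
  obtain rfl : a = none := not_not.mp fun ha => hmin a ha hab
  obtain ⟨w, rfl⟩ := Option.ne_none_iff_exists'.mp hb
  have hw : w ∈ R := by
    rcases (hD.1.1 _ _ hab : w = u ∨ w = v) with rfl | rfl <;> assumption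
  obtain ⟨a', ha', ha'b⟩ := exists_ne_arc_of_inDeg_eq_two (hD.inDeg_eq_two hw) hab
  exact hmin a' ha' ha'b

lemma IsStackFreeOrientation.independent (hD : IsStackFreeOrientation G u v R D) :
    ∀ a ∈ R, ∀ b ∈ R, ¬ G.Adj a b := by
  intro a ha b hb hab
  by_cases huv : s(a, b) = s(u, v)
  · rcases Sym2.eq_iff.mp huv with ⟨rfl, rfl⟩ | ⟨rfl, rfl⟩
    exacts [hD.1.not_mem_and_mem ⟨ha, hb⟩, hD.1.not_mem_and_mem ⟨hb, ha⟩]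
  · have hadj : (subdivide G u v).Adj (some b) (some a) := ⟨hab.symm, by rwa [Sym2.eq_swap]⟩
    by_cases hd : D (some a) (some b)
    · exact hD.2 a b hd ha hb
    · exact hD.2 b a ((hD.1.1.2 _ _ hadj).mpr hd) hb ha

lemma IsBinOrientation.not_isRetCut (hD : IsBinOrientation G u v R D) (R' : Set V)
    (E' : Set (Sym2 (Option V))) : ¬ IsRetCut G u v R R' E' := by
  rintro ⟨hR', -, -, hdisc, hedge, hvert, hsep⟩
  set H' := (subdivide G u v).deleteEdges E'
  have hB : {z | ¬ H'.Reachable none z}.Nonempty := by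
    by_contra! h
    have hreach (z : Option V) : H'.Reachable none z :=
      not_not.mp fun hz => Set.eq_empty_iff_forall_notMem.mp h z hz
    exact hdisc ⟨fun x y => (hreach x).symm.trans (hreach y)⟩
  obtain ⟨b, hb, hmin⟩ := hD.2.1.exists_minimal hB
  have hcut (a : Option V) (hab : D a b) : H'.Reachable none a ∧ s(a, b) ∈ E' := by
    have ha : H'.Reachable none a := not_not.mp fun ha => hmin a ha hab
    refine ⟨ha, by_contra fun he => hb (ha.trans (SimpleGraph.Adj.reachable ?_))⟩
    exact (SimpleGraph.deleteEdges_adj).mpr ⟨hD.1.1 _ _ hab, he⟩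
  obtain ⟨a, hab⟩ := hD.exists_arc fun h => hb (h ▸ SimpleGraph.Reachable.refl _)
  obtain ⟨ha, he⟩ := hcut a hab
  obtain ⟨r, ⟨hr, hre⟩, -⟩ := hedge _ he
  rcases Sym2.mem_iff.mp hre with rfl | rfl
  · exact hsep r hr ha
  · obtain ⟨a', ha'a, ha'b⟩ := exists_ne_arc_of_inDeg_eq_two (hD.inDeg_eq_two (hR' hr)) hab
    obtain ⟨e, -, huniq⟩ := hvert r hr
    have hee := (huniq _ ⟨he, Sym2.mem_mk_right _ _⟩).trans
      (huniq _ ⟨(hcut a' ha'b).2, Sym2.mem_mk_right _ _⟩).symm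
    exact ha'a (Sym2.congr_left.mp hee).symm

end Forward

lemma SimpleGraph.Reachable.mem_of_deleteEdges {W : Type} {H : SimpleGraph W} {A : Set W}
    {E' : Set (Sym2 W)} (hE' : ∀ x y, H.Adj x y → x ∈ A → y ∉ A → s(x, y) ∈ E') {x y : W}
    (hxy : (H.deleteEdges E').Reachable x y) (hx : x ∈ A) : y ∈ A := by
  obtain ⟨p⟩ := hxy
  induction p with
  | nil => exact hx
  | cons hadj _ ih =>
    obtain ⟨hadj, hnot⟩ := SimpleGraph.deleteEdges_adj.mp hadj
    exact ih (not_not.mp fun h => hnot (hE' _ _ hadj hx h))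

section ExitCut

variable {V : Type} {G : SimpleGraph V} {u v : V} {R : Set V} {A : Set (Option V)}

def exitPairs (G : SimpleGraph V) (u v : V) (A : Set (Option V)) : Set (Option V × V) :=
  {p | p.1 ∈ A ∧ some p.2 ∉ A ∧ (subdivide G u v).Adj p.1 (some p.2)}

lemma injOn_exitPairs_edge :
    Set.InjOn (fun p : Option V × V => s(p.1, some p.2)) (exitPairs G u v A) := by
  rintro ⟨x, r⟩ ⟨hx, -, -⟩ ⟨x', r'⟩ ⟨-, hr', -⟩ (he : s(x, some r) = s(x', some r'))
  rcases Sym2.eq_iff.mp he with ⟨rfl, h⟩ | ⟨rfl, -⟩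
  · rw [Option.some_injective _ h]
  · exact absurd hx hr'

lemma isRetCut_exitPairs (hroot : none ∈ A) (hA : A ≠ Set.univ)
    (hexit : ∀ x y, x ∈ A → y ∉ A → (subdivide G u v).Adj x y → ∃ r ∈ R, y = some r)
    (huniq : ∀ x x' y, x ∈ A → x' ∈ A → y ∉ A → (subdivide G u v).Adj x y →
      (subdivide G u v).Adj x' y → x' = x) :
    IsRetCut G u v R (Prod.snd '' exitPairs G u v A)
      ((fun p => s(p.1, some p.2)) '' exitPairs G u v A) := by
  set P := exitPairs G u v A
  have hreach {y} (hy : ((subdivide G u v).deleteEdges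
      ((fun p => s(p.1, some p.2)) '' P)).Reachable none y) : y ∈ A := by
    refine hy.mem_of_deleteEdges (fun x y hxy hx hy => ?_) hroot
    obtain ⟨r, -, rfl⟩ := hexit x y hx hy hxy
    exact ⟨(x, r), ⟨hx, hy, hxy⟩, rfl⟩
  have hsnd : Set.InjOn Prod.snd P := by
    rintro ⟨x, r⟩ ⟨hx, hr, hxr⟩ ⟨x', r'⟩ ⟨hx', -, hx'r⟩ (rfl : r = r')
    obtain rfl := huniq x x' _ hx hx' hr hxr hx'r
    rfl
  obtain ⟨z, hz⟩ := (Set.ne_univ_iff_exists_notMem A).mp hA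
  refine ⟨?_, ?_, ?_, ?_, ?_, ?_, ?_⟩
  · rintro _ ⟨⟨x, r⟩, ⟨hx, hr, hxr⟩, rfl⟩
    obtain ⟨r', hr', h⟩ := hexit _ _ hx hr hxr
    rwa [Option.some_injective _ h]
  · rintro _ ⟨p, hp, rfl⟩
    exact hp.2.2
  · rw [hsnd.ncard_image, injOn_exitPairs_edge.ncard_image]
  · exact fun hconn => hz (hreach (hconn.preconnected none z))
  · rintro _ ⟨⟨x, r⟩, hp, rfl⟩
    refine ⟨r, ⟨⟨_, hp, rfl⟩, Sym2.mem_mk_right _ _⟩, ?_⟩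
    rintro r' ⟨⟨p', hp', rfl⟩, hmem⟩
    rcases Sym2.mem_iff.mp hmem with h | h
    · exact absurd (h ▸ hp.1) hp'.2.1
    · exact Option.some_injective _ h
  · rintro _ ⟨⟨x, r⟩, hp, rfl⟩
    refine ⟨s(x, some r), ⟨⟨_, hp, rfl⟩, Sym2.mem_mk_right _ _⟩, ?_⟩
    rintro _ ⟨⟨⟨x', r'⟩, hp', rfl⟩, hmem : some r ∈ s(x', some r')⟩
    rcases Sym2.mem_iff.mp hmem with h | h
    · exact absurd (h ▸ hp'.1) hp.2.1
    · obtain rfl := Option.some_injective _ h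
      obtain rfl := huniq x x' _ hp.1 hp'.1 hp.2.1 hp.2.2 hp'.2.2
      rfl
  · rintro _ ⟨p, hp, rfl⟩ hr
    exact hp.2.1 (hreach hr)

end ExitCut

section Backward

variable {V : Type} {G : SimpleGraph V} {u v : V} {R : Set V}

lemma none_mem_bootstrapClosure :
    none ∈ bootstrapClosure (subdivide G u v) (prescribedInDeg R) :=
  mem_bootstrapClosure.mpr ⟨1, Or.inr (Nat.zero_le _)⟩

lemma exists_isBinOrientation_of_bootstrapClosure_eq_univ [Fintype V] (huv : G.Adj u v)
    (hcard : R.ncard + Fintype.card V = G.edgeSet.ncard + 1)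
    (h : bootstrapClosure (subdivide G u v) (prescribedInDeg R) = Set.univ) :
    ∃ D, IsBinOrientation G u v R D := by
  obtain ⟨D, hD, hac, hle⟩ := exists_acyclic_orientation_of_bootstrapClosure_eq_univ h
  refine ⟨D, isBinOrientation_iff.mpr ⟨hD, hac, hD.inDeg_eq_of_le_of_sum_eq hle ?_⟩⟩
  rw [sum_prescribedInDeg, hcard, ncard_edgeSet_subdivide huv]

variable [Finite V] {x y : Option V}

lemma exists_mem_eq_some_of_adj_notMem_bootstrapClosure
    (hx : x ∈ bootstrapClosure (subdivide G u v) (prescribedInDeg R))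
    (hy : y ∉ bootstrapClosure (subdivide G u v) (prescribedInDeg R))
    (hxy : (subdivide G u v).Adj x y) : ∃ r ∈ R, y = some r :=
  eq_some_mem_of_one_lt_prescribedInDeg <|
    card_lt_of_notMem_bootstrapClosure hy {x} (by simpa using hx) (by simpa using hxy)

lemma eq_of_adj_notMem_bootstrapClosure {x' : Option V}
    (hx : x ∈ bootstrapClosure (subdivide G u v) (prescribedInDeg R))
    (hx' : x' ∈ bootstrapClosure (subdivide G u v) (prescribedInDeg R))
    (hy : y ∉ bootstrapClosure (subdivide G u v) (prescribedInDeg R))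
    (hxy : (subdivide G u v).Adj x y) (hx'y : (subdivide G u v).Adj x' y) : x' = x := by
  by_contra hne
  have h := card_lt_of_notMem_bootstrapClosure hy {x', x}
    (by simp [Set.insert_subset_iff, hx, hx']) (by simp [hxy, hx'y])
  rw [Finset.card_pair hne] at h
  exact (prescribedInDeg_le_two y).not_gt h

lemma exists_isRetCut_of_bootstrapClosure_ne_univ
    (h : bootstrapClosure (subdivide G u v) (prescribedInDeg R) ≠ Set.univ) :
    ∃ R' E', IsRetCut G u v R R' E' :=
  ⟨_, _, isRetCut_exitPairs none_mem_bootstrapClosure h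
    (fun _ _ => exists_mem_eq_some_of_adj_notMem_bootstrapClosure)
    (fun _ _ _ => eq_of_adj_notMem_bootstrapClosure)⟩

end Backward

theorem stackfree_orientable_iff_general {V : Type} [Fintype V]
    (G : SimpleGraph V)
    (u v : V) (he : G.Adj u v) (R : Set V)
    (hcard : R.ncard + Fintype.card V = G.edgeSet.ncard + 1) :
    (∃ D : Option V → Option V → Prop, IsStackFreeOrientation G u v R D) ↔
      ((¬ ∃ (R' : Set V) (E' : Set (Sym2 (Option V))), IsRetCut G u v R R' E') ∧
        ∀ a ∈ R, ∀ b ∈ R, ¬ G.Adj a b) := by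
  constructor
  · rintro ⟨D, hD⟩
    exact ⟨fun ⟨R', E', hcut⟩ => hD.1.not_isRetCut R' E' hcut, hD.independent⟩
  · rintro ⟨hnocut, hindep⟩
    have hact : bootstrapClosure (subdivide G u v) (prescribedInDeg R) = Set.univ :=
      not_not.mp fun h => hnocut (exists_isRetCut_of_bootstrapClosure_ne_univ h)
    obtain ⟨D, hD⟩ := exists_isBinOrientation_of_bootstrapClosure_eq_univ he hcard hact
    exact ⟨D, hD, fun a b hab ha hb => hindep a ha b hb (hD.1.1 _ _ hab).1⟩

/-- With `|R| = |E| − |V| + 1`, the triple `(N, e_ρ, R)` is stack-free orientable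
iff it has no reticulation cut and `R` is an independent set of `N`. -/
theorem stackfree_orientable_iff {V X : Type} [Fintype V] [DecidableEq V]
    (G : SimpleGraph V) [DecidableRel G.Adj] (hnet : IsUndirBinNet G)
    (labels : X ≃ {w : V // G.degree w = 1})
    (u v : V) (he : G.Adj u v) (R : Set V)
    (hcard : R.ncard + Fintype.card V = G.edgeSet.ncard + 1) :
    (∃ D : Option V → Option V → Prop, IsStackFreeOrientation G u v R D) ↔
      ((¬ ∃ (R' : Set V) (E' : Set (Sym2 (Option V))), IsRetCut G u v R R' E') ∧
        ∀ a ∈ R, ∀ b ∈ R, ¬ G.Adj a b) :=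
  stackfree_orientable_iff_general G u v he R hcard
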